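/- The scalar mean squared error of the almost unbiased Liu-type estimator satisfies trace(Cov_AULTE) + b_AULTEᵀ b_AULTE = Σ_{j=1}^p (λ_j − d)²(λ_j + d + 2k)²/(λ_j (λ_j + k)⁴) + (k + d)⁴ Σ_{j=1}^p α_j²/(λ_j + k)⁴, where α = Qᵀβ. -/

import Mathlib

open Matrix

/-- Covariance matrix of the Liu-type estimator (LTE). -/
noncomputable def covLTE {p : ℕ} (V : Matrix (Fin p) (Fin p) ℝ) (k d : ℝ) :
    Matrix (Fin p) (Fin p) ℝ :=
  (V + k • 1)⁻¹ * (V - d • 1) * V⁻¹ * (V - d • 1) * (V + k • 1)⁻¹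

/-- Covariance matrix of the almost unbiased Liu-type estimator (AULTE). -/
noncomputable def covAULTE {p : ℕ} (V : Matrix (Fin p) (Fin p) ℝ) (k d : ℝ) :
    Matrix (Fin p) (Fin p) ℝ :=
  (1 - (k + d) ^ 2 • ((V + k • 1)⁻¹) ^ 2) * V⁻¹ * (1 - (k + d) ^ 2 • ((V + k • 1)⁻¹) ^ 2)

/-- The matrix `M` entering the modified almost unbiased Liu-type estimator (MAULTE). -/
noncomputable def mMAULTE {p : ℕ} (V : Matrix (Fin p) (Fin p) ℝ) (k d : ℝ) :
    Matrix (Fin p) (Fin p) ℝ :=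
  (1 - (k + d) ^ 2 • ((V + k • 1)⁻¹) ^ 2) * (1 - (k + d) • (V + k • 1)⁻¹)

/-- Covariance matrix of the MAULTE. -/
noncomputable def covMAULTE {p : ℕ} (V : Matrix (Fin p) (Fin p) ℝ) (k d : ℝ) :
    Matrix (Fin p) (Fin p) ℝ :=
  mMAULTE V k d * V⁻¹ * (mMAULTE V k d)ᵀ

/-- Bias vector of the LTE. -/
noncomputable def biasLTE {p : ℕ} (V : Matrix (Fin p) (Fin p) ℝ) (k d : ℝ) (β : Fin p → ℝ) :
    Fin p → ℝ :=
  (-(d + k)) • ((V + k • 1)⁻¹ *ᵥ β)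

/-- Bias vector of the AULTE. -/
noncomputable def biasAULTE {p : ℕ} (V : Matrix (Fin p) (Fin p) ℝ) (k d : ℝ) (β : Fin p → ℝ) :
    Fin p → ℝ :=
  (-(d + k) ^ 2) • (((V + k • 1)⁻¹) ^ 2 *ᵥ β)

/-- Bias vector of the MAULTE. -/
noncomputable def biasMAULTE {p : ℕ} (V : Matrix (Fin p) (Fin p) ℝ) (k d : ℝ) (β : Fin p → ℝ) :
    Fin p → ℝ :=
  (-(d + k)) •
    (((1 + (d + k) • (V + k • 1)⁻¹ - (d + k) ^ 2 • ((V + k • 1)⁻¹) ^ 2) * (V + k • 1)⁻¹) *ᵥ β)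

/-- Matrix mean squared error built from a covariance matrix and a bias vector. -/
noncomputable def mmse {p : ℕ} (C : Matrix (Fin p) (Fin p) ℝ) (b : Fin p → ℝ) :
    Matrix (Fin p) (Fin p) ℝ :=
  C + vecMulVec b b

/-!
Conjugation `A ↦ Q * A * Qᵀ` by an orthogonal matrix is an algebra automorphism of the matrix
ring, and every ring automorphism commutes with matrix inversion. Hence
`Cov_AULTE(QΛQᵀ) = Q Cov_AULTE(Λ) Qᵀ` and `b_AULTE(QΛQᵀ, β) = Q b_AULTE(Λ, Qᵀβ)`, and since trace
and Euclidean norm are invariant under this change of basis, everything reduces to the diagonal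
case. There the `j`-th diagonal entry of the covariance is `(1 - (k+d)²/(λⱼ+k)²)² / λⱼ`, and
`(λⱼ+k)² - (k+d)² = (λⱼ-d)(λⱼ+d+2k)` gives the stated form.
-/

namespace Matrix

variable {n R : Type*} [Fintype n] [DecidableEq n] [CommRing R]

theorem map_nonsing_inv {F : Type*} [EquivLike F (Matrix n n R) (Matrix n n R)]
    [RingEquivClass F (Matrix n n R) (Matrix n n R)] (f : F) (A : Matrix n n R) :
    f A⁻¹ = (f A)⁻¹ := by
  by_cases hA : IsUnit A.det
  · exact (inv_eq_left_inv (by rw [← map_mul, nonsing_inv_mul A hA, map_one])).symm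
  · have hfA : ¬IsUnit (f A).det := by
      rwa [← isUnit_iff_isUnit_det, MulEquiv.isUnit_map, isUnit_iff_isUnit_det]
    rw [nonsing_inv_apply_not_isUnit A hA, nonsing_inv_apply_not_isUnit _ hfA, map_zero]

-- `inv_diagonal` inverts `v` as an element of the ring `n → K`, which gives the junk value `0`
-- as soon as a single entry vanishes.
theorem inv_diagonal_of_ne_zero {K : Type*} [Field K] {v : n → K} (hv : ∀ i, v i ≠ 0) :
    (diagonal v)⁻¹ = diagonal v⁻¹ :=
  inv_eq_left_inv (by simp [diagonal_mul_diagonal, hv])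

theorem trace_mul_mul_transpose_of_transpose_mul_eq_one {Q : Matrix n n R} (hQ : Qᵀ * Q = 1)
    (A : Matrix n n R) : (Q * A * Qᵀ).trace = A.trace := by
  rw [trace_mul_cycle, hQ, one_mul]

theorem mulVec_dotProduct_mulVec_of_transpose_mul_eq_one {Q : Matrix n n R} (hQ : Qᵀ * Q = 1)
    (x : n → R) : Q *ᵥ x ⬝ᵥ Q *ᵥ x = x ⬝ᵥ x := by
  rw [dotProduct_mulVec, ← mulVec_transpose, mulVec_mulVec, hQ, one_mulVec]

variable [StarRing R] [TrivialStar R]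

noncomputable def orthogonalConj (Q : Matrix n n R) (hQ : Q * Qᵀ = 1) :
    Matrix n n R ≃ₐ[R] Matrix n n R :=
  (Unitary.conjStarAlgAut R (Matrix n n R)
    ⟨Q, mem_unitaryGroup_iff.2 <| by
      rwa [star_eq_conjTranspose, conjTranspose_eq_transpose_of_trivial]⟩).toAlgEquiv

@[simp]
theorem orthogonalConj_apply {Q : Matrix n n R} (hQ : Q * Qᵀ = 1) (A : Matrix n n R) :
    orthogonalConj Q hQ A = Q * A * Qᵀ := by
  simp [orthogonalConj, star_eq_conjTranspose, conjTranspose_eq_transpose_of_trivial]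

end Matrix

section AULTE

variable {p : ℕ} (k d : ℝ)

theorem covAULTE_map (f : Matrix (Fin p) (Fin p) ℝ ≃ₐ[ℝ] Matrix (Fin p) (Fin p) ℝ)
    (V : Matrix (Fin p) (Fin p) ℝ) : covAULTE (f V) k d = f (covAULTE V k d) := by
  simp only [covAULTE, map_mul, map_sub, map_one, map_smul, map_pow, map_add, map_nonsing_inv]

theorem biasAULTE_eq_mulVec (V : Matrix (Fin p) (Fin p) ℝ) (β : Fin p → ℝ) :
    biasAULTE V k d β = ((-(d + k) ^ 2) • ((V + k • 1)⁻¹) ^ 2) *ᵥ β := by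
  rw [biasAULTE, smul_mulVec]

theorem biasAULTE_map (f : Matrix (Fin p) (Fin p) ℝ ≃ₐ[ℝ] Matrix (Fin p) (Fin p) ℝ)
    (V : Matrix (Fin p) (Fin p) ℝ) (β : Fin p → ℝ) :
    biasAULTE (f V) k d β = f ((-(d + k) ^ 2) • ((V + k • 1)⁻¹) ^ 2) *ᵥ β := by
  simp only [biasAULTE_eq_mulVec, map_smul, map_pow, map_nonsing_inv, map_add, map_one]

theorem covAULTE_conj {Q : Matrix (Fin p) (Fin p) ℝ} (hQ : Q * Qᵀ = 1)
    (V : Matrix (Fin p) (Fin p) ℝ) : covAULTE (Q * V * Qᵀ) k d = Q * covAULTE V k d * Qᵀ := by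
  simpa only [orthogonalConj_apply] using covAULTE_map k d (orthogonalConj Q hQ) V

theorem biasAULTE_conj {Q : Matrix (Fin p) (Fin p) ℝ} (hQ : Q * Qᵀ = 1)
    (V : Matrix (Fin p) (Fin p) ℝ) (β : Fin p → ℝ) :
    biasAULTE (Q * V * Qᵀ) k d β = Q *ᵥ biasAULTE V k d (Qᵀ *ᵥ β) := by
  rw [← orthogonalConj_apply hQ, biasAULTE_map, orthogonalConj_apply, biasAULTE_eq_mulVec,
    ← mulVec_mulVec, ← mulVec_mulVec]

theorem covAULTE_diagonal {lam : Fin p → ℝ} (hlam : ∀ j, lam j ≠ 0)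
    (hlamk : ∀ j, lam j + k ≠ 0) :
    covAULTE (diagonal lam) k d =
      diagonal fun j => (1 - (k + d) ^ 2 / (lam j + k) ^ 2) ^ 2 / lam j := by
  rw [covAULTE, smul_one_eq_diagonal, diagonal_add, inv_diagonal_of_ne_zero hlamk,
    inv_diagonal_of_ne_zero hlam, diagonal_pow, ← diagonal_smul, ← diagonal_one, diagonal_sub,
    diagonal_mul_diagonal, diagonal_mul_diagonal]
  congr 1
  funext j
  simp only [inv_pow, Pi.smul_apply, Pi.inv_apply, Pi.pow_apply, smul_eq_mul]
  ring

theorem biasAULTE_diagonal {lam : Fin p → ℝ} (hlamk : ∀ j, lam j + k ≠ 0) (α : Fin p → ℝ) :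
    biasAULTE (diagonal lam) k d α = fun j => -(d + k) ^ 2 * α j / (lam j + k) ^ 2 := by
  rw [biasAULTE, smul_one_eq_diagonal, diagonal_add, inv_diagonal_of_ne_zero hlamk, diagonal_pow]
  funext j
  simp only [inv_pow, Pi.smul_apply, mulVec_diagonal, Pi.inv_apply, Pi.pow_apply, smul_eq_mul,
    neg_mul]
  ring

end AULTE

/-- Scalar MSE of the AULTE. -/
theorem mse_AULTE_eq (p : ℕ) (Q : Matrix (Fin p) (Fin p) ℝ) (hQ : Q * Qᵀ = 1)
    (lam : Fin p → ℝ) (hlam : ∀ j, 0 < lam j) (k d : ℝ) (hk : 0 < k) (β : Fin p → ℝ) :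
    (covAULTE (Q * Matrix.diagonal lam * Qᵀ) k d).trace +
        biasAULTE (Q * Matrix.diagonal lam * Qᵀ) k d β ⬝ᵥ
          biasAULTE (Q * Matrix.diagonal lam * Qᵀ) k d β =
      (∑ j, (lam j - d) ^ 2 * (lam j + d + 2 * k) ^ 2 / (lam j * (lam j + k) ^ 4)) +
        (k + d) ^ 4 * ∑ j, (Qᵀ *ᵥ β) j ^ 2 / (lam j + k) ^ 4 := by
  have hQ' : Qᵀ * Q = 1 := mul_eq_one_comm.mp hQ
  have hlamk : ∀ j, lam j + k ≠ 0 := fun j => (add_pos (hlam j) hk).ne'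
  rw [covAULTE_conj k d hQ, trace_mul_mul_transpose_of_transpose_mul_eq_one hQ',
    covAULTE_diagonal k d (fun j => (hlam j).ne') hlamk, trace_diagonal,
    biasAULTE_conj k d hQ, mulVec_dotProduct_mulVec_of_transpose_mul_eq_one hQ',
    biasAULTE_diagonal k d hlamk, dotProduct, Finset.mul_sum]
  congr 1 <;> refine Finset.sum_congr rfl fun j _ => ?_
  · field_simp [hlamk j]
    ring
  · field_simp [hlamk j]
    ring
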